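/- arXiv:0808.2588 — 2 statements merged into one kernel-verified Lean document; each statement's English description precedes it below -/
import Mathlib

section
/- Let p be a prime number, G a finite group, and r a natural number. Let M be a module over the group ring ℤ_p[G] such that M is a free ℤ_p-module of rank r·|G|. If M can be generated by r elements x₁, …, x_r as a ℤ_p[G]-module, then x₁, …, x_r form a ℤ_p[G]-basis of M; in particular, M is a free ℤ_p[G]-module of rank r. -/
/-!
The `ℤ_p[G]`-linear map `ℤ_p[G]^r → M` sending the standard basis to `x` is surjective, and as
`ℤ_p`-modules source and target are both free of rank `r·|G|`. Over a commutative ring a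
surjection from a finite module onto a module isomorphic to it is injective (Orzech,
Vasconcelos), so the map is an isomorphism and `x` is a `ℤ_p[G]`-basis.
-/

open Module

theorem linearIndependent_of_span_eq_top_of_linearEquiv {A R M ι : Type*} [CommSemiring A]
    [OrzechProperty A] [Semiring R] [Algebra A R] [AddCommMonoid M] [Module R M] [Module A M]
    [IsScalarTower A R M] [Module.Finite A M] (e : (ι →₀ R) ≃ₗ[A] M) {x : ι → M}
    (hx : Submodule.span R (Set.range x) = ⊤) : LinearIndependent R x := by
  have hsurj : Function.Surjective (Finsupp.linearCombination R x) := by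
    rw [← LinearMap.range_eq_top, Finsupp.range_linearCombination, hx]
  exact OrzechProperty.injective_of_surjective_of_injective e.toLinearMap
    ((Finsupp.linearCombination R x).restrictScalars A) e.injective hsurj

theorem nonempty_finsupp_monoidAlgebra_linearEquiv_of_basis {A G M : Type*} [Semiring A]
    [Fintype G] [AddCommMonoid M] [Module A M] (r : ℕ)
    (b : Basis (Fin (r * Fintype.card G)) A M) :
    Nonempty ((Fin r →₀ MonoidAlgebra A G) ≃ₗ[A] M) := by
  have hcard : Fintype.card ((_ : Fin r) × G) = r * Fintype.card G := by
    simp [Fintype.card_sigma]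
  exact ⟨(Finsupp.basis fun _ => MonoidAlgebra.basis G A).equiv b
    (Fintype.equivFinOfCardEq hcard)⟩

/-- Let `p` be a prime, `G` a finite group and `r : ℕ`. Let `M` be a
module over the group ring `ℤ_p[G]` which, viewed as a `ℤ_p`-module via restriction of
scalars, is free of rank `r * |G|`.  If `M` is generated over `ℤ_p[G]` by `r` elements
`x 0, …, x (r-1)`, then these elements form a `ℤ_p[G]`-basis of `M`; in particular `M` is
a free `ℤ_p[G]`-module of rank `r`. -/
theorem stickelberger_group_ring_free
    (p : ℕ) [Fact p.Prime] (G : Type*) [Group G] [Fintype G] (r : ℕ)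
    (M : Type*) [AddCommGroup M] [Module (MonoidAlgebra ℤ_[p] G) M]
    [Module ℤ_[p] M] [IsScalarTower ℤ_[p] (MonoidAlgebra ℤ_[p] G) M]
    (hfree : Nonempty (Module.Basis (Fin (r * Fintype.card G)) ℤ_[p] M))
    (x : Fin r → M)
    (hgen : Submodule.span (MonoidAlgebra ℤ_[p] G) (Set.range x) = ⊤) :
    ∃ b : Module.Basis (Fin r) (MonoidAlgebra ℤ_[p] G) M, ∀ i : Fin r, b i = x i := by
  obtain ⟨bM⟩ := hfree
  have : Module.Finite ℤ_[p] M := .of_basis bM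
  obtain ⟨e⟩ := nonempty_finsupp_monoidAlgebra_linearEquiv_of_basis r bM
  have hli := linearIndependent_of_span_eq_top_of_linearEquiv e hgen
  exact ⟨.mk hli hgen.ge, Basis.mk_apply hli hgen.ge⟩
end

section
/- Let p be a prime number, let k ⊆ L be number fields with L/k a finite Galois extension, and let Δ = Gal(L/k). Let χ : Δ → ℚ_pˣ be a group homomorphism (a ℚ_p-valued character of Δ). Let Δ act on the ℚ_p-algebra L ⊗_ℚ ℚ_p through its action on the first factor. Then the χ-eigenspace {x ∈ L ⊗_ℚ ℚ_p : σ • x = χ(σ) • x for all σ ∈ Δ} has ℚ_p-dimension equal to [k : ℚ]. -/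
/-!
Twisting the Galois action by `χ⁻¹` turns the `χ`-eigenspace into a space of invariants,
whose dimension is the trace of the averaging projector `|Δ|⁻¹ ∑ χ(σ)⁻¹ σ`. A normal basis
of `L/k` is permuted freely by `Δ`, so every `σ ≠ 1` has trace zero over `ℚ`, and the trace
of the projector is `[L : ℚ] / |Δ| = [k : ℚ]`.
-/

open Module TensorProduct

theorem LinearMap.trace_eq_zero_of_apply_basis_ne {R M ι : Type*} [CommRing R]
    [AddCommGroup M] [Module R M] [Fintype ι] [DecidableEq ι] (b : Basis ι R M)
    {f : M →ₗ[R] M} {e : ι → ι} (hf : ∀ i, f (b i) = b (e i)) (he : ∀ i, e i ≠ i) :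
    trace R M f = 0 := by
  rw [trace_eq_matrix_trace R b, Matrix.trace]
  refine Finset.sum_eq_zero fun i _ => ?_
  rw [Matrix.diag, toMatrix_apply, hf, b.repr_self, Finsupp.single_apply, if_neg (he i)]

namespace Representation

variable {k G V : Type*}

def twist [CommSemiring k] [Monoid G] [AddCommMonoid V] [Module k V]
    (ρ : Representation k G V) (χ : G →* kˣ) : Representation k G V where
  toFun g := ((χ g)⁻¹ : kˣ) • ρ g
  map_one' := by simp
  map_mul' g h := by
    rw [map_mul, map_mul, mul_inv_rev, mul_comm, mul_smul, smul_mul_smul_comm, smul_smul]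

theorem invariants_twist [CommRing k] [Group G] [AddCommGroup V] [Module k V]
    (ρ : Representation k G V) (χ : G →* kˣ) :
    (ρ.twist χ).invariants = ⨅ g, End.eigenspace (ρ g) (χ g) := by
  ext v
  simp only [mem_invariants, Submodule.mem_iInf, End.mem_eigenspace_iff]
  refine forall_congr' fun g => ?_
  rw [twist, MonoidHom.coe_mk, OneHom.coe_mk, LinearMap.smul_apply, inv_smul_eq_iff,
    Units.smul_def]

theorem finrank_iInf_eigenspace [Field k] [Group G] [Fintype G]
    [Invertible (Fintype.card G : k)] [AddCommGroup V] [Module k V] [FiniteDimensional k V]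
    (ρ : Representation k G V) (χ : G →* kˣ) :
    (finrank k ↥(⨅ g, End.eigenspace (ρ g) (χ g)) : k) =
      ⅟(Fintype.card G : k) * ∑ g, ((χ g)⁻¹ : kˣ) * LinearMap.trace k V (ρ g) := by
  rw [← ρ.invariants_twist, ← (ρ.twist χ).isProj_averageMap.trace]
  simp [GroupAlgebra.average, map_sum, twist, Units.smul_def]

end Representation

namespace AlgEquiv

variable (K R F L : Type*) [Field K] [CommRing R] [Algebra K R] [Field F] [Field L]
  [Algebra K F] [Algebra F L] [Algebra K L] [IsScalarTower K F L]

noncomputable def baseChangeRepresentation : Representation R (L ≃ₐ[F] L) (R ⊗[K] L) :=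
  (End.baseChangeHom K R L).toMonoidHom.comp
    ((toLinearMapHom K L).comp (restrictScalarsHom K))

variable {K R F L} [FiniteDimensional K F] [FiniteDimensional F L] [IsGalois F L]

theorem trace_restrictScalars_eq_zero {σ : L ≃ₐ[F] L} (hσ : σ ≠ 1) :
    LinearMap.trace K L (σ.toLinearMap.restrictScalars K) = 0 := by
  classical
  refine LinearMap.trace_eq_zero_of_apply_basis_ne
    ((finBasis K F).smulTower (IsGalois.normalBasis F L))
    (e := Prod.map id (σ * ·)) (fun i => ?_) fun i h => hσ ?_
  · obtain ⟨j, τ⟩ := i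
    rw [Basis.smulTower_apply, Basis.smulTower_apply, LinearMap.restrictScalars_apply,
      toLinearMap_apply, map_smul, Prod.map_apply, IsGalois.normalBasis_apply τ,
      IsGalois.normalBasis_apply (σ * τ), mul_apply]
    rfl
  · simpa using congrArg Prod.snd h

theorem trace_baseChangeRepresentation [DecidableEq (L ≃ₐ[F] L)] (σ : L ≃ₐ[F] L) :
    LinearMap.trace R _ (baseChangeRepresentation K R F L σ) =
      if σ = 1 then (finrank K L : R) else 0 := by
  have : FiniteDimensional K L := .trans K F L
  change LinearMap.trace R _ ((σ.toLinearMap.restrictScalars K).baseChange R) = _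
  rw [LinearMap.trace_baseChange]
  split_ifs with hσ
  · subst hσ
    change algebraMap K R (LinearMap.trace K L LinearMap.id) = _
    rw [LinearMap.trace_id, map_natCast]
  · rw [σ.trace_restrictScalars_eq_zero hσ, map_zero]

end AlgEquiv

theorem finrank_chi_eigenspace_tensor_padic_general
    (p : ℕ) [Fact p.Prime]
    (k L : Type*) [Field k] [Field L] [NumberField k] [NumberField L]
    [Algebra k L] [IsGalois k L]
    (χ : (L ≃ₐ[k] L) →* ℚ_[p]ˣ) :
    Module.finrank ℚ_[p]
      ↥(⨅ σ : L ≃ₐ[k] L,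
          Module.End.eigenspace
            (LinearMap.baseChange ℚ_[p]
              ((σ.toAlgHom.toRingHom.toRatAlgHom : L →ₐ[ℚ] L).toLinearMap))
            ((χ σ : ℚ_[p])))
      = Module.finrank ℚ k := by
  classical
  let := AlgEquiv.fintype k L
  let : Invertible (Fintype.card (L ≃ₐ[k] L) : ℚ_[p]) :=
    invertibleOfNonzero (Nat.cast_ne_zero.2 Fintype.card_ne_zero)
  have hcard : Fintype.card (L ≃ₐ[k] L) * finrank ℚ k = finrank ℚ L := by
    rw [← Nat.card_eq_fintype_card, IsGalois.card_aut_eq_finrank, mul_comm, finrank_mul_finrank]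
  refine Nat.cast_injective (R := ℚ_[p]) ?_
  -- `baseChangeRepresentation ℚ ℚ_[p] k L σ` is definitionally the operator in the statement.
  calc _ = _ := (AlgEquiv.baseChangeRepresentation ℚ ℚ_[p] k L).finrank_iInf_eigenspace χ
    _ = ⅟(Fintype.card (L ≃ₐ[k] L) : ℚ_[p]) * finrank ℚ L := by
      simp [AlgEquiv.trace_baseChangeRepresentation]
    _ = finrank ℚ k := by rw [← hcard, Nat.cast_mul, invOf_mul_cancel_left]

/-- Let `p` be a prime, `k ⊆ L` number fields with `L/k` finite Galois
and `Δ = Gal(L/k)`, and let `χ : Δ → ℚ_pˣ` be a character.  Let `Δ` act on the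
`ℚ_p`-algebra `L ⊗_ℚ ℚ_p` through its action on `L` (each `σ ∈ Δ` acting as `σ ⊗ id`,
realized here on `ℚ_p ⊗[ℚ] L` as the base change of the `ℚ`-linear map `σ`).  Then the
`χ`-eigenspace `{x : σ • x = χ σ • x for all σ ∈ Δ}` has `ℚ_p`-dimension `[k : ℚ]`. -/
theorem finrank_chi_eigenspace_tensor_padic
    (p : ℕ) [Fact p.Prime]
    (k L : Type*) [Field k] [Field L] [NumberField k] [NumberField L]
    [Algebra k L] [FiniteDimensional k L] [IsGalois k L]
    (χ : (L ≃ₐ[k] L) →* ℚ_[p]ˣ) :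
    Module.finrank ℚ_[p]
      ↥(⨅ σ : L ≃ₐ[k] L,
          Module.End.eigenspace
            (LinearMap.baseChange ℚ_[p]
              ((σ.toAlgHom.toRingHom.toRatAlgHom : L →ₐ[ℚ] L).toLinearMap))
            ((χ σ : ℚ_[p])))
      = Module.finrank ℚ k :=
  finrank_chi_eigenspace_tensor_padic_general p k L χ
end
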